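/- Let R = ℤ[a_α, a_λ, u_{2α}, u_λ]/(2a_α, 4a_λ, a_α²u_λ − 2a_λu_{2α}). Then as an abelian group R decomposes as a direct sum: ℤ[u_{2α}, u_λ] ⊕ (ℤ/4)[u_{2α}, u_λ]⟨a_λⁱ⟩_{i≥1} ⊕ (ℤ/2)[u_{2α}, a_λ]⟨a_αⁱ⟩_{i≥1} ⊕ (ℤ/2)[u_{2α}, a_λ]⟨u_λⁱ⟩_{i≥1}⟨a_α⟩; equivalently, the monomials u_{2α}^j u_λ^k (free of additive order ∞), a_λⁱ u_{2α}^j u_λ^k with i ≥ 1 (of additive order 4), a_αⁱ a_λ^l u_{2α}^j with i ≥ 1 (order 2), and a_α a_λ^l u_{2α}^j u_λ^k with k ≥ 1 (order 2) form a ℤ-basis of R in the sense that R is the direct sum of the cyclic groups they generate. -/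

import Mathlib

open MvPolynomial

/-- The ring `R = ℤ[a_α, a_λ, u_{2α}, u_λ]/(2a_α, 4a_λ, a_α²u_λ − 2a_λu_{2α})`
(variables `0,1,2,3 = a_α, a_λ, u_{2α}, u_λ`). -/
noncomputable abbrev posConeC4 : Type :=
  MvPolynomial (Fin 4) ℤ ⧸ Ideal.span
    ({(2 : MvPolynomial (Fin 4) ℤ) * X 0, 4 * X 1, (X 0) ^ 2 * X 3 - 2 * X 1 * X 2} :
      Set (MvPolynomial (Fin 4) ℤ))

/-- Index of the `ℤ`-basis monomials in the additive decomposition of `posConeC4`. -/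
inductive PosConeIdx : Type
  /-- `u_{2α}^j u_λ^k`, of infinite additive order -/
  | free (j k : ℕ)
  /-- `a_λ^{i+1} u_{2α}^j u_λ^k`, of additive order 4 -/
  | four (i j k : ℕ)
  /-- `a_α^{i+1} a_λ^l u_{2α}^j`, of additive order 2 -/
  | twoA (i l j : ℕ)
  /-- `a_α a_λ^l u_{2α}^j u_λ^{k+1}`, of additive order 2 -/
  | twoU (l j k : ℕ)

/-- The corresponding monomial classes in `posConeC4`. -/
noncomputable def posConeGen : PosConeIdx → posConeC4 :=
  letI aA : posConeC4 := Ideal.Quotient.mk _ (X 0)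
  letI aL : posConeC4 := Ideal.Quotient.mk _ (X 1)
  letI u2 : posConeC4 := Ideal.Quotient.mk _ (X 2)
  letI uL : posConeC4 := Ideal.Quotient.mk _ (X 3)
  fun i => match i with
  | .free j k => u2 ^ j * uL ^ k
  | .four i j k => aL ^ (i + 1) * u2 ^ j * uL ^ k
  | .twoA i l j => aA ^ (i + 1) * aL ^ l * u2 ^ j
  | .twoU l j k => aA * aL ^ l * u2 ^ j * uL ^ (k + 1)

/-!
The relations rewrite every monomial `a_α^p a_λ^q u_{2α}^r u_λ^s` as a multiple of one of the
listed generators (using `a_α²u_λ = 2a_λu_{2α}` and `a_α³u_λ = 0`), and kill the listed multiples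
of the generators; this gives spanning and upper bounds for the orders. Conversely, sending each
monomial to that normal form in `⨁ ℤ/(order)` annihilates the ideal of relations, so it descends
to an additive map on `R` taking the generators to the standard basis vectors; this gives the
exact orders and independence.
-/

deriving instance DecidableEq for PosConeIdx

open DirectSum

section DirectSumDetection

variable {ι G : Type*} [DecidableEq ι] [AddCommGroup G] {H : ι → Type*}
  [∀ i, AddCommGroup (H i)] (φ : G →+ ⨁ i, H i) {g : ι → G} {h : ∀ i, H i}

theorem addOrderOf_dvd_of_map_eq_of (hφ : ∀ i, φ (g i) = DirectSum.of H i (h i)) (i : ι) :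
    addOrderOf (h i) ∣ addOrderOf (g i) := by
  simpa [hφ, addOrderOf_injective _ (DirectSum.of_injective i)] using addOrderOf_map_dvd φ (g i)

theorem iSupIndep_zmultiples_of_map_eq_of (hφ : ∀ i, φ (g i) = DirectSum.of H i (h i))
    (hord : ∀ i, addOrderOf (g i) ∣ addOrderOf (h i)) :
    iSupIndep fun i => AddSubgroup.zmultiples (g i) := by
  refine iSupIndep_def.2 fun i => AddSubgroup.disjoint_def.2 fun {x} hx hx' => ?_
  obtain ⟨n, rfl⟩ := AddSubgroup.mem_zmultiples_iff.1 hx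
  let π : G →+ H i := (DFinsupp.evalAddMonoidHom i).comp φ
  have hπ (j : ι) : π (g j) = of H j (h j) i := congrArg (· i) (hφ j)
  have hker : (⨆ (j) (_ : j ≠ i), AddSubgroup.zmultiples (g j)) ≤ π.ker :=
    iSup₂_le fun j hj => AddSubgroup.zmultiples_le.2 <| by
      rw [AddMonoidHom.mem_ker, hπ, of_eq_of_ne _ _ _ hj.symm]
  have hn : n • h i = 0 := by simpa [hπ] using hker hx'
  exact addOrderOf_dvd_iff_zsmul_eq_zero.1 <|
    (Int.natCast_dvd_natCast.2 (hord i)).trans (addOrderOf_dvd_iff_zsmul_eq_zero.2 hn)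

end DirectSumDetection

theorem AddMonoidHom.map_eq_zero_of_mem_ideal_span {A M : Type*} [CommRing A] [AddCommGroup M]
    (ψ : A →+ M) {s : Set A} (hs : ∀ g ∈ s, ∀ f, ψ (f * g) = 0) {x : A}
    (hx : x ∈ Ideal.span s) : ψ x = 0 := by
  suffices ∀ f, ψ (f * x) = 0 by simpa using this 1
  induction hx using Submodule.span_induction with
  | mem g hg => exact hs g hg
  | zero => simp
  | add x y _ _ hx hy => intro f; rw [mul_add, map_add, hx, hy, add_zero]
  | smul a x _ hx => intro f; rw [smul_eq_mul, ← mul_assoc]; exact hx _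

namespace MvPolynomial

theorem monomial_eq_smul_monomial_one {σ R : Type*} [CommSemiring R] (d : σ →₀ ℕ) (c : R) :
    monomial d c = c • monomial d 1 := by
  rw [smul_monomial, smul_eq_mul, mul_one]

theorem map_mul_eq_zero_of_forall_monomial {σ M : Type*} [AddCommGroup M]
    (ψ : MvPolynomial σ ℤ →+ M) {g : MvPolynomial σ ℤ}
    (hg : ∀ d, ψ (monomial d 1 * g) = 0) (f : MvPolynomial σ ℤ) : ψ (f * g) = 0 := by
  induction f using MvPolynomial.induction_on' with
  | monomial d c =>
    rw [monomial_eq_smul_monomial_one, smul_mul_assoc, map_zsmul, hg, smul_zero]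
  | add p q hp hq => rw [add_mul, map_add, hp, hq, add_zero]

theorem monomial_one_eq_fin_four {R : Type*} [CommSemiring R] (d : Fin 4 →₀ ℕ) :
    monomial d (1 : R) = X 0 ^ d 0 * X 1 ^ d 1 * X 2 ^ d 2 * X 3 ^ d 3 := by
  rw [monomial_eq, Finsupp.prod_fintype _ _ fun _ => pow_zero _, Fin.prod_univ_four, C_1, one_mul]

end MvPolynomial

namespace PosConeIdx

def order : PosConeIdx → ℕ
  | free .. => 0
  | four .. => 4
  | twoA .. | twoU .. => 2

end PosConeIdx

namespace PosConeC4

/-- `ZMod 0 = ℤ`, so the free summands are the `ZMod i.order` with `i.order = 0`. -/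
abbrev Model : Type := ⨁ i : PosConeIdx, ZMod i.order

noncomputable abbrev gen (i : PosConeIdx) : Model := DirectSum.of _ i 1

theorem order_nsmul_gen (i : PosConeIdx) : i.order • gen i = 0 := by
  rw [gen, ← map_nsmul, nsmul_eq_mul, mul_one, ZMod.natCast_self, map_zero]

/-- The normal form of `a_α^p a_λ^q u_{2α}^r u_λ^s`, read off from `a_α²u_λ = 2a_λu_{2α}` and
`a_α³u_λ = 0`. -/
noncomputable def normalForm : ℕ → ℕ → ℕ → ℕ → Model
  | 0, 0, r, s => gen (.free r s)
  | 0, q + 1, r, s => gen (.four q r s)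
  | p + 1, q, r, 0 => gen (.twoA p q r)
  | 1, q, r, s + 1 => gen (.twoU q r s)
  | 2, q, r, s + 1 => 2 • gen (.four q (r + 1) s)
  | _ + 3, _, _, _ + 1 => 0

theorem two_nsmul_normalForm_succ (p q r s : ℕ) : 2 • normalForm (p + 1) q r s = 0 := by
  match p, s with
  | _, 0 => exact order_nsmul_gen (.twoA _ _ _)
  | 0, _ + 1 => exact order_nsmul_gen (.twoU _ _ _)
  | 1, _ + 1 => rw [normalForm, smul_smul]; exact order_nsmul_gen (.four _ _ _)
  | _ + 2, _ + 1 => exact smul_zero _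

theorem four_nsmul_normalForm_succ (p q r s : ℕ) : 4 • normalForm p (q + 1) r s = 0 := by
  match p with
  | 0 => exact order_nsmul_gen (.four _ _ _)
  | p + 1 => rw [show 4 = 2 * 2 from rfl, mul_nsmul, two_nsmul_normalForm_succ, nsmul_zero]

theorem normalForm_add_two_succ (p q r s : ℕ) :
    normalForm (p + 2) q r (s + 1) = 2 • normalForm p (q + 1) (r + 1) s := by
  match p with
  | 0 => rfl
  | p + 1 => exact (two_nsmul_normalForm_succ p (q + 1) (r + 1) s).symm

/-- The normal form of `a_α^p a_λ^q u_{2α}^r u_λ^s`, read off from `a_α²u_λ = 2a_λu_{2α}` and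
`a_α³u_λ = 0`. -/
noncomputable def normalFormHom : MvPolynomial (Fin 4) ℤ →ₗ[ℤ] Model :=
  (basisMonomials (Fin 4) ℤ).constr ℤ fun d => normalForm (d 0) (d 1) (d 2) (d 3)

theorem normalFormHom_monomial (d : Fin 4 →₀ ℕ) :
    normalFormHom (monomial d 1) = normalForm (d 0) (d 1) (d 2) (d 3) := by
  simpa [normalFormHom] using (basisMonomials (Fin 4) ℤ).constr_basis ℤ _ d

theorem normalFormHom_X_pow_mul (p q r s : ℕ) :
    normalFormHom (X 0 ^ p * X 1 ^ q * X 2 ^ r * X 3 ^ s) = normalForm p q r s := by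
  simpa [monomial_one_eq_fin_four] using
    normalFormHom_monomial (Finsupp.equivFunOnFinite.symm ![p, q, r, s])

theorem normalFormHom_X_pow_mul_two_mul (p q r s : ℕ) :
    normalFormHom (X 0 ^ p * X 1 ^ q * X 2 ^ r * X 3 ^ s * (2 * X 0)) = 0 := by
  rw [show (X 0 ^ p * X 1 ^ q * X 2 ^ r * X 3 ^ s * (2 * X 0) : MvPolynomial (Fin 4) ℤ) =
      2 • (X 0 ^ (p + 1) * X 1 ^ q * X 2 ^ r * X 3 ^ s) by
    rw [nsmul_eq_mul]; push_cast; ring,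
    map_nsmul, normalFormHom_X_pow_mul, two_nsmul_normalForm_succ]

theorem normalFormHom_X_pow_mul_four_mul (p q r s : ℕ) :
    normalFormHom (X 0 ^ p * X 1 ^ q * X 2 ^ r * X 3 ^ s * (4 * X 1)) = 0 := by
  rw [show (X 0 ^ p * X 1 ^ q * X 2 ^ r * X 3 ^ s * (4 * X 1) : MvPolynomial (Fin 4) ℤ) =
      4 • (X 0 ^ p * X 1 ^ (q + 1) * X 2 ^ r * X 3 ^ s) by
    rw [nsmul_eq_mul]; push_cast; ring,
    map_nsmul, normalFormHom_X_pow_mul, four_nsmul_normalForm_succ]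

theorem normalFormHom_X_pow_mul_sub (p q r s : ℕ) :
    normalFormHom (X 0 ^ p * X 1 ^ q * X 2 ^ r * X 3 ^ s * (X 0 ^ 2 * X 3 - 2 * X 1 * X 2)) =
      0 := by
  rw [show (X 0 ^ p * X 1 ^ q * X 2 ^ r * X 3 ^ s * (X 0 ^ 2 * X 3 - 2 * X 1 * X 2) :
        MvPolynomial (Fin 4) ℤ) =
      X 0 ^ (p + 2) * X 1 ^ q * X 2 ^ r * X 3 ^ (s + 1) -
        2 • (X 0 ^ p * X 1 ^ (q + 1) * X 2 ^ (r + 1) * X 3 ^ s) by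
    rw [nsmul_eq_mul]; push_cast; ring,
    map_sub, map_nsmul, normalFormHom_X_pow_mul, normalFormHom_X_pow_mul, normalForm_add_two_succ,
    sub_self]

noncomputable abbrev relations : Ideal (MvPolynomial (Fin 4) ℤ) :=
  Ideal.span {2 * X 0, 4 * X 1, X 0 ^ 2 * X 3 - 2 * X 1 * X 2}

theorem normalFormHom_eq_zero_of_mem {f : MvPolynomial (Fin 4) ℤ} (hf : f ∈ relations) :
    normalFormHom f = 0 := by
  refine normalFormHom.toAddMonoidHom.map_eq_zero_of_mem_ideal_span (fun g hg => ?_) hf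
  rcases hg with rfl | rfl | rfl <;>
    refine map_mul_eq_zero_of_forall_monomial _ fun d => ?_ <;>
    rw [LinearMap.toAddMonoidHom_coe, monomial_one_eq_fin_four]
  exacts [normalFormHom_X_pow_mul_two_mul .., normalFormHom_X_pow_mul_four_mul ..,
    normalFormHom_X_pow_mul_sub ..]

noncomputable def toModel : posConeC4 →+ Model :=
  QuotientAddGroup.lift relations.toAddSubgroup normalFormHom.toAddMonoidHom
    fun _ => normalFormHom_eq_zero_of_mem

noncomputable abbrev aAlpha : posConeC4 := Ideal.Quotient.mk relations (X 0)
noncomputable abbrev aLambda : posConeC4 := Ideal.Quotient.mk relations (X 1)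
noncomputable abbrev uTwoAlpha : posConeC4 := Ideal.Quotient.mk relations (X 2)
noncomputable abbrev uLambda : posConeC4 := Ideal.Quotient.mk relations (X 3)

@[simp] theorem posConeGen_free (j k : ℕ) :
    posConeGen (.free j k) = uTwoAlpha ^ j * uLambda ^ k := rfl

@[simp] theorem posConeGen_four (i j k : ℕ) :
    posConeGen (.four i j k) = aLambda ^ (i + 1) * uTwoAlpha ^ j * uLambda ^ k := rfl

@[simp] theorem posConeGen_twoA (i l j : ℕ) :
    posConeGen (.twoA i l j) = aAlpha ^ (i + 1) * aLambda ^ l * uTwoAlpha ^ j := rfl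

@[simp] theorem posConeGen_twoU (l j k : ℕ) :
    posConeGen (.twoU l j k) = aAlpha * aLambda ^ l * uTwoAlpha ^ j * uLambda ^ (k + 1) := rfl

theorem toModel_monomial (p q r s : ℕ) :
    toModel (aAlpha ^ p * aLambda ^ q * uTwoAlpha ^ r * uLambda ^ s) = normalForm p q r s := by
  simp only [← map_pow, ← map_mul]
  exact normalFormHom_X_pow_mul p q r s

theorem toModel_posConeGen (i : PosConeIdx) : toModel (posConeGen i) = gen i := by
  cases i with
  | free j k => simpa [normalForm] using toModel_monomial 0 0 j k
  | four i j k => simpa [normalForm] using toModel_monomial 0 (i + 1) j k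
  | twoA i l j => simpa [normalForm] using toModel_monomial (i + 1) l j 0
  | twoU l j k => simpa [normalForm] using toModel_monomial 1 l j (k + 1)

theorem two_mul_aAlpha : 2 * aAlpha = 0 := by
  have h : Ideal.Quotient.mk relations (2 * X 0) = 0 :=
    Ideal.Quotient.eq_zero_iff_mem.2 (Ideal.subset_span (by simp))
  rwa [map_mul, map_ofNat] at h

theorem four_mul_aLambda : 4 * aLambda = 0 := by
  have h : Ideal.Quotient.mk relations (4 * X 1) = 0 :=
    Ideal.Quotient.eq_zero_iff_mem.2 (Ideal.subset_span (by simp))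
  rwa [map_mul, map_ofNat] at h

theorem aAlpha_sq_mul_uLambda : aAlpha ^ 2 * uLambda = 2 * aLambda * uTwoAlpha := by
  have h : Ideal.Quotient.mk relations (X 0 ^ 2 * X 3 - 2 * X 1 * X 2) = 0 :=
    Ideal.Quotient.eq_zero_iff_mem.2 (Ideal.subset_span (by simp))
  rwa [map_sub, map_mul, map_mul, map_mul, map_pow, map_ofNat, sub_eq_zero] at h

theorem order_nsmul_posConeGen (i : PosConeIdx) : i.order • posConeGen i = 0 := by
  cases i with
  | free j k => exact zero_nsmul _
  | four i j k =>
    rw [PosConeIdx.order, posConeGen_four, nsmul_eq_mul]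
    linear_combination (aLambda ^ i * uTwoAlpha ^ j * uLambda ^ k) * four_mul_aLambda
  | twoA i l j =>
    rw [PosConeIdx.order, posConeGen_twoA, nsmul_eq_mul]
    linear_combination (aAlpha ^ i * aLambda ^ l * uTwoAlpha ^ j) * two_mul_aAlpha
  | twoU l j k =>
    rw [PosConeIdx.order, posConeGen_twoU, nsmul_eq_mul]
    linear_combination (aLambda ^ l * uTwoAlpha ^ j * uLambda ^ (k + 1)) * two_mul_aAlpha

theorem addOrderOf_posConeGen (i : PosConeIdx) : addOrderOf (posConeGen i) = i.order :=
  (addOrderOf_dvd_of_nsmul_eq_zero (order_nsmul_posConeGen i)).antisymm <| by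
    simpa [ZMod.addOrderOf_one] using addOrderOf_dvd_of_map_eq_of toModel toModel_posConeGen i

theorem monomial_mem_iSup_zmultiples (p q r s : ℕ) :
    aAlpha ^ p * aLambda ^ q * uTwoAlpha ^ r * uLambda ^ s ∈
      ⨆ i, AddSubgroup.zmultiples (posConeGen i) := by
  have hgen (i : PosConeIdx) : posConeGen i ∈ ⨆ i, AddSubgroup.zmultiples (posConeGen i) :=
    AddSubgroup.mem_iSup_of_mem i (AddSubgroup.mem_zmultiples _)
  match p, q, s with
  | 0, 0, s => simpa using hgen (.free r s)
  | 0, q + 1, s => simpa using hgen (.four q r s)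
  | p + 1, q, 0 => simpa using hgen (.twoA p q r)
  | 1, q, s + 1 => simpa using hgen (.twoU q r s)
  | 2, q, s + 1 =>
    rw [show aAlpha ^ 2 * aLambda ^ q * uTwoAlpha ^ r * uLambda ^ (s + 1) =
        2 • posConeGen (.four q (r + 1) s) by
      rw [posConeGen_four, nsmul_eq_mul]
      linear_combination (aLambda ^ q * uTwoAlpha ^ r * uLambda ^ s) * aAlpha_sq_mul_uLambda]
    exact nsmul_mem (hgen _) 2
  | p + 3, q, s + 1 =>
    rw [show aAlpha ^ (p + 3) * aLambda ^ q * uTwoAlpha ^ r * uLambda ^ (s + 1) = 0 by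
      linear_combination (aAlpha ^ (p + 1) * aLambda ^ q * uTwoAlpha ^ r * uLambda ^ s) *
          aAlpha_sq_mul_uLambda +
        (aAlpha ^ p * aLambda ^ (q + 1) * uTwoAlpha ^ (r + 1) * uLambda ^ s) * two_mul_aAlpha]
    exact zero_mem _

theorem iSup_zmultiples_posConeGen : ⨆ i, AddSubgroup.zmultiples (posConeGen i) = ⊤ := by
  rw [eq_top_iff]
  rintro x -
  obtain ⟨f, rfl⟩ := Ideal.Quotient.mk_surjective x
  induction f using MvPolynomial.induction_on' with
  | monomial d c =>
    rw [monomial_eq_smul_monomial_one, map_zsmul, monomial_one_eq_fin_four]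
    simpa using zsmul_mem (monomial_mem_iSup_zmultiples (d 0) (d 1) (d 2) (d 3)) c
  | add f g hf hg => rw [map_add]; exact add_mem hf hg

end PosConeC4

/-- As an abelian group,
`R = ℤ[a_α, a_λ, u_{2α}, u_λ]/(2a_α, 4a_λ, a_α²u_λ − 2a_λu_{2α})` decomposes as
`ℤ[u_{2α},u_λ] ⊕ (ℤ/4)[u_{2α},u_λ]⟨a_λ^i⟩_{i≥1} ⊕ (ℤ/2)[u_{2α},a_λ]⟨a_α^i⟩_{i≥1}
⊕ (ℤ/2)[u_{2α},a_λ]⟨u_λ^i⟩_{i≥1}⟨a_α⟩`: the listed monomials have the listed additive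
orders (`addOrderOf x = 0` meaning infinite order), the cyclic subgroups they generate
are independent, and together they span, so `R` is the internal direct sum of these
cyclic groups. -/
theorem stmt_6 :
    (∀ j k, addOrderOf (posConeGen (.free j k)) = 0) ∧
    (∀ i j k, addOrderOf (posConeGen (.four i j k)) = 4) ∧
    (∀ i l j, addOrderOf (posConeGen (.twoA i l j)) = 2) ∧
    (∀ l j k, addOrderOf (posConeGen (.twoU l j k)) = 2) ∧
    iSupIndep (fun i => AddSubgroup.zmultiples (posConeGen i)) ∧
    (⨆ i, AddSubgroup.zmultiples (posConeGen i)) = ⊤ :=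
  have hord := PosConeC4.addOrderOf_posConeGen
  ⟨fun j k => hord (.free j k), fun i j k => hord (.four i j k), fun i l j => hord (.twoA i l j),
    fun l j k => hord (.twoU l j k),
    iSupIndep_zmultiples_of_map_eq_of PosConeC4.toModel PosConeC4.toModel_posConeGen fun i => by
      rw [hord, ZMod.addOrderOf_one],
    PosConeC4.iSup_zmultiples_posConeGen⟩
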